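/- arXiv:math/0407117 — 8 statements merged into one kernel-verified Lean document; each statement's English description precedes it below -/
import Mathlib

section
/- If A ⊆ {1,...,n} is a Sidon set (all pairwise sums a+b with a ≤ b distinct), then |A| < n^{1/2} + n^{1/4} + 1. -/
/-!
Slide a window `(t, t + l]` across `[1, n]`: the `n + l - 1` windows that meet `[1, n]` contain
`|A| l` elements of `A` in total. An ordered pair `a ≠ b` of elements of `A` lying in the window
at `t` is recorded by its offsets `(a - t, b - t) ∈ (0, l]²`; since a Sidon set has distinct
differences, these offsets determine `a`, `b` and `t`, so there are at most `l (l - 1)` such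
triples. Cauchy–Schwarz over the windows gives `(|A| l)² ≤ (n + l - 1)(l (l - 1) + |A| l)`, and
the choice `l = ⌊n^{3/4}⌋ + 1` turns this into `|A| < n^{1/2} + n^{1/4} + 1`.
-/

open Finset

lemma Finset.card_offDiag_add_card {α : Type*} [DecidableEq α] (s : Finset α) :
    #s.offDiag + #s = #s ^ 2 := by
  rw [offDiag_card, Nat.sub_add_cancel (Nat.le_mul_self _), sq]

def IsSidon {α : Type*} [Add α] (A : Finset α) : Prop :=
  ∀ a ∈ A, ∀ b ∈ A, ∀ c ∈ A, ∀ d ∈ A,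
    a + b = c + d → (a = c ∧ b = d) ∨ (a = d ∧ b = c)

namespace IsSidon

variable {α : Type*}

lemma image_natCast {A : Finset ℕ} (hA : IsSidon A) : IsSidon (A.image ((↑) : ℕ → ℤ)) := by
  simp only [IsSidon, mem_image, forall_exists_index, and_imp]
  rintro _ a ha rfl _ b hb rfl _ c hc rfl _ d hd rfl h
  exact_mod_cast hA a ha b hb c hc d hd (by exact_mod_cast h)

lemma injOn_sub [AddCommGroup α] {A : Finset α} (hA : IsSidon A) :
    Set.InjOn (fun p : α × α ↦ p.1 - p.2) A.offDiag := by
  rintro ⟨a, b⟩ hab ⟨c, d⟩ hcd h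
  simp only [coe_offDiag] at hab hcd h
  rcases hA a hab.1 d hcd.2.1 c hcd.1 b hab.2.1 (by rw [sub_eq_sub_iff_add_eq_add] at h; exact h)
    with ⟨rfl, rfl⟩ | ⟨rfl, rfl⟩
  · rfl
  · exact absurd rfl hab.2.2

end IsSidon

lemma sum_card_inter_Ioc_eq (A T : Finset ℤ) (l : ℕ) (hT : ∀ a ∈ A, Ico (a - l) a ⊆ T) :
    ∑ t ∈ T, #(A ∩ Ioc t (t + l)) = #A * l := by
  have hfiber : ∀ a ∈ A, #{t ∈ T | a ∈ Ioc t (t + (l : ℤ))} = l := by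
    intro a ha
    rw [show {t ∈ T | a ∈ Ioc t (t + (l : ℤ))} = Ico (a - l) a by
      ext t
      simp only [mem_filter, mem_Ioc, mem_Ico]
      constructor
      · rintro ⟨-, h₁, h₂⟩; omega
      · intro h; exact ⟨hT a ha (mem_Ico.2 h), by omega, by omega⟩]
    simp
  simp_rw [← filter_mem_eq_inter, card_filter]
  rw [sum_comm, ← sum_const_nat hfiber]
  simp_rw [card_filter]

lemma IsSidon.sum_card_offDiag_inter_Ioc_le {A : Finset ℤ} (hA : IsSidon A) (T : Finset ℤ)
    (l : ℕ) : ∑ t ∈ T, #(A ∩ Ioc t (t + l)).offDiag ≤ l * l - l := by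
  rw [← card_sigma]
  calc #(T.sigma fun t ↦ (A ∩ Ioc t (t + l)).offDiag)
      ≤ #(Ioc (0 : ℤ) l).offDiag := by
        refine card_le_card_of_injOn (fun x ↦ (x.2.1 - x.1, x.2.2 - x.1)) ?_ ?_
        · rintro ⟨t, a, b⟩ h
          simp only [mem_coe, mem_sigma, mem_offDiag, mem_inter, mem_Ioc] at h ⊢
          omega
        · rintro ⟨t, a, b⟩ h ⟨s, c, d⟩ h' he
          simp only [mem_coe, mem_sigma, mem_offDiag, mem_inter] at h h'
          simp only [Prod.mk.injEq] at he
          obtain ⟨rfl, rfl⟩ : a = c ∧ b = d := Prod.ext_iff.1 <|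
            hA.injOn_sub (x₁ := (a, b)) (x₂ := (c, d))
              (mem_offDiag.2 ⟨h.2.1.1, h.2.2.1.1, h.2.2.2⟩)
              (mem_offDiag.2 ⟨h'.2.1.1, h'.2.2.1.1, h'.2.2.2⟩) (show a - b = c - d by omega)
          obtain rfl : t = s := by omega
          rfl
    _ = l * l - l := by simp [offDiag_card]

theorem IsSidon.card_mul_sq_le {A : Finset ℤ} (hA : IsSidon A) {n : ℕ} (hsub : A ⊆ Icc 1 n)
    (l : ℕ) : (#A * l) ^ 2 ≤ (n + l - 1) * (l * l - l + #A * l) := by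
  set T := Ioo (-(l : ℤ)) n
  have hT : ∀ a ∈ A, Ico (a - l) a ⊆ T := by
    intro a ha t ht
    have := mem_Icc.1 (hsub ha)
    rw [mem_Ico] at ht
    exact mem_Ioo.2 ⟨by omega, by omega⟩
  have hwindows := sum_card_inter_Ioc_eq A T l hT
  calc (#A * l) ^ 2 = (∑ t ∈ T, #(A ∩ Ioc t (t + l))) ^ 2 := by rw [hwindows]
    _ ≤ #T * ∑ t ∈ T, #(A ∩ Ioc t (t + l)) ^ 2 := sq_sum_le_card_mul_sum_sq
    _ = #T * (∑ t ∈ T, #(A ∩ Ioc t (t + l)).offDiag + ∑ t ∈ T, #(A ∩ Ioc t (t + l))) := by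
      simp_rw [← card_offDiag_add_card, sum_add_distrib]
    _ ≤ (n + l - 1) * (l * l - l + #A * l) := by
      rw [hwindows, Int.card_Ioo]
      gcongr
      · omega
      · exact hA.sum_card_offDiag_inter_Ioc_le T l

theorem IsSidon.card_sq_mul_le_real {A : Finset ℕ} (hA : IsSidon A) {n : ℕ}
    (hsub : A ⊆ Icc 1 n) {l : ℕ} (hl : 1 ≤ l) : (#A : ℝ) ^ 2 * l ≤ (n + l - 1) * (l - 1 + #A) := by
  have hsubℤ : A.image ((↑) : ℕ → ℤ) ⊆ Icc 1 n := by
    simp only [subset_iff, mem_image, mem_Icc, forall_exists_index, and_imp] at hsub ⊢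
    rintro _ a ha rfl
    exact_mod_cast hsub ha
  have hcount := hA.image_natCast.card_mul_sq_le hsubℤ l
  rw [card_image_of_injective _ Nat.cast_injective] at hcount
  have hcountℝ : ((#A : ℝ) ^ 2 * l) * l ≤ ((n + l - 1) * (l - 1 + #A)) * l := by
    have := (Nat.cast_le (α := ℝ)).2 hcount
    push_cast [Nat.cast_sub (show 1 ≤ n + l by omega), Nat.cast_sub (Nat.le_mul_self l)] at this
    linarith
  exact le_of_mul_le_mul_right hcountℝ (by exact_mod_cast hl)

lemma lt_sq_add_add_one_of_sq_mul_le {q K L : ℝ} (hq : 0 ≤ q) (hL : q ^ 3 < L)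
    (hL' : L ≤ q ^ 3 + 1) (h : K ^ 2 * L ≤ (q ^ 4 + L - 1) * (L - 1 + K)) : K < q ^ 2 + q + 1 := by
  by_contra! hM
  set M := q ^ 2 + q + 1
  have hL0 : 0 ≤ L := by nlinarith [pow_nonneg hq 3]
  -- `M` lies to the right of the vertex of `K ↦ K ^ 2 * L - (q ^ 4 + L - 1) * (L - 1 + K)`.
  have hvertex : q ^ 4 ≤ (2 * M - 1) * L := by
    have : (2 * M - 1) * q ^ 3 ≤ (2 * M - 1) * L := by gcongr; nlinarith
    nlinarith [pow_nonneg hq 3, pow_nonneg hq 5]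
  have hmono : M ^ 2 * L - (q ^ 4 + L - 1) * (L - 1 + M)
      ≤ K ^ 2 * L - (q ^ 4 + L - 1) * (L - 1 + K) := by
    nlinarith [mul_nonneg (mul_nonneg (sub_nonneg.2 hM) (sub_nonneg.2 hM)) hL0,
      mul_nonneg (sub_nonneg.2 hM) (sub_nonneg.2 hvertex)]
  have hpos : 0 < M ^ 2 * L - (q ^ 4 + L - 1) * (L - 1 + M) := by
    nlinarith [mul_nonneg (sub_nonneg.2 hL.le) (sub_nonneg.2 hL'), pow_nonneg hq 3,
      pow_nonneg hq 5]
  linarith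

theorem sidon_upper_bound (n : ℕ) (A : Finset ℕ)
    (hsub : A ⊆ Finset.Icc 1 n)
    (hsidon : ∀ a ∈ A, ∀ b ∈ A, ∀ c ∈ A, ∀ d ∈ A,
      a + b = c + d → (a = c ∧ b = d) ∨ (a = d ∧ b = c)) :
    (A.card : ℝ) < (n : ℝ) ^ ((1 : ℝ) / 2) + (n : ℝ) ^ ((1 : ℝ) / 4) + 1 := by
  set q := (n : ℝ) ^ ((1 : ℝ) / 4)
  have hq : 0 ≤ q := by positivity
  have hq_pow (k : ℕ) : q ^ k = (n : ℝ) ^ ((k : ℝ) / 4) := by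
    rw [← Real.rpow_natCast, ← Real.rpow_mul (Nat.cast_nonneg n)]
    ring_nf
  have hq4 : q ^ 4 = n := by simpa using hq_pow 4
  have hq2 : (n : ℝ) ^ ((1 : ℝ) / 2) = q ^ 2 := by rw [hq_pow]; norm_num
  set l := ⌊q ^ 3⌋₊ + 1
  have hl : q ^ 3 < l := by simpa [l] using Nat.lt_floor_add_one (q ^ 3)
  have hl' : (l : ℝ) ≤ q ^ 3 + 1 := by
    push_cast [l]
    linarith [Nat.floor_le (pow_nonneg hq 3)]
  rw [hq2]
  refine lt_sq_add_add_one_of_sq_mul_le hq hl hl' ?_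
  rw [hq4]
  exact IsSidon.card_sq_mul_le_real hsidon hsub (Nat.le_add_left 1 _)
end

section
/- Let p be an odd prime and θ a primitive root modulo p. For each t with 1 ≤ t ≤ p−1, let a_t be the unique residue modulo p(p−1) with a_t ≡ t (mod p−1) and a_t ≡ θ^t (mod p). Then the set A = {a_t : 1 ≤ t ≤ p−1} is a Sidon set modulo p²−p: for every k, the number of ordered pairs (x,y) ∈ A×A with x+y ≡ k (mod p²−p) is at most 2. -/
/-!
Write `A` for the set of the `a_t`. Modulo `p`, every `a ∈ A` equals `θ ^ a` (as `a ≡ t` modulo the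
order `p - 1` of `θ`), and conversely `a ∈ A` is determined by its residue modulo `p`. If
`x + y ≡ x' + y'` modulo `p (p - 1)`, the residues modulo `p` therefore have the same sum and, since
`θ ^ x θ ^ y = θ ^ (x + y)` only depends on `x + y` modulo `p - 1`, the same product. Over the field
`ZMod p` two pairs with the same sum and product coincide up to order, hence so do `(x, y)` and
`(x', y')`.
-/

theorem IsPrimitiveRoot.zpow_eq_zpow_iff_modEq {G : Type*} [CommGroup G] {ζ : G} {k : ℕ}
    (h : IsPrimitiveRoot ζ k) {m n : ℤ} : ζ ^ m = ζ ^ n ↔ m ≡ n [ZMOD k] := by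
  rw [_root_.zpow_eq_zpow_iff_modEq, ← h.eq_orderOf]

theorem IsPrimitiveRoot.zpow_eq_zpow_iff_modEq_sub_one {G : Type*} [CommGroup G] {ζ : G} {n : ℕ}
    (hn : 1 ≤ n) (h : IsPrimitiveRoot ζ (n - 1)) {a b : ℤ} :
    ζ ^ a = ζ ^ b ↔ a ≡ b [ZMOD (n : ℤ) - 1] := by
  rw [h.zpow_eq_zpow_iff_modEq, Nat.cast_sub hn, Nat.cast_one]

theorem eq_and_eq_or_eq_and_eq_of_add_eq_add_of_mul_eq_mul {R : Type*} [CommRing R]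
    [NoZeroDivisors R] {a b c d : R} (hadd : a + b = c + d) (hmul : a * b = c * d) :
    a = c ∧ b = d ∨ a = d ∧ b = c := by
  have hroots : (a - c) * (a - d) = 0 := by linear_combination a * hadd - hmul
  rcases mul_eq_zero.mp hroots with hac | had
  · obtain rfl := sub_eq_zero.mp hac
    exact Or.inl ⟨rfl, add_left_cancel hadd⟩
  · obtain rfl := sub_eq_zero.mp had
    exact Or.inr ⟨rfl, add_left_cancel (hadd.trans (add_comm c a))⟩

theorem Set.encard_le_two_of_forall_eq_or_eq_swap {α : Type*} {S : Set (α × α)}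
    (h : ∀ q ∈ S, ∀ q' ∈ S, q' = q ∨ q' = q.swap) : S.encard ≤ 2 := by
  rcases S.eq_empty_or_nonempty with rfl | ⟨q, hq⟩
  · simp
  · calc S.encard ≤ ({q, q.swap} : Set (α × α)).encard :=
          Set.encard_mono fun q' hq' ↦ h q hq q' hq'
      _ ≤ ({q.swap} : Set (α × α)).encard + 1 := Set.encard_insert_le _ _
      _ = 2 := by rw [Set.encard_singleton]; rfl

-- The set `A` of the paper, each `a_t` taken as its representative in `[0, p (p - 1))`.
def ruzsaSet (p : ℕ) (θ : ℤ) : Set ℤ :=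
  {a : ℤ | 0 ≤ a ∧ a < (p : ℤ) * (p - 1) ∧
    ∃ t ∈ Finset.Icc 1 (p - 1), a ≡ (t : ℤ) [ZMOD ((p : ℤ) - 1)] ∧ a ≡ θ ^ t [ZMOD (p : ℤ)]}

namespace ruzsaSet

variable {p : ℕ} {θ : ℤ} {u : (ZMod p)ˣ} {a b c d : ℤ}

section

variable (hp : 1 ≤ p) (hu : IsPrimitiveRoot u (p - 1)) (huθ : (u : ZMod p) = θ)
include hp hu huθ

theorem intCast_eq_zpow (ha : a ∈ ruzsaSet p θ) : (a : ZMod p) = ↑(u ^ a) := by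
  obtain ⟨-, -, t, -, hat, haθ⟩ := ha
  have hzpow : u ^ a = u ^ (t : ℤ) :=
    (hu.zpow_eq_zpow_iff_modEq_sub_one hp).mpr hat
  rw [hzpow, zpow_natCast, Units.val_pow_eq_pow_val, huθ]
  exact_mod_cast (ZMod.intCast_eq_intCast_iff _ _ _).mpr haθ

theorem eq_of_intCast_eq (ha : a ∈ ruzsaSet p θ) (hb : b ∈ ruzsaSet p θ)
    (h : (a : ZMod p) = b) : a = b := by
  have hmodp : a ≡ b [ZMOD p] := (ZMod.intCast_eq_intCast_iff _ _ _).mp h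
  have hmodp1 : a ≡ b [ZMOD (p : ℤ) - 1] := by
    rwa [intCast_eq_zpow hp hu huθ ha, intCast_eq_zpow hp hu huθ hb, Units.val_inj,
      hu.zpow_eq_zpow_iff_modEq_sub_one hp] at h
  have hcop : IsCoprime (p : ℤ) ((p : ℤ) - 1) := ⟨1, -1, by ring⟩
  have hmod : a ≡ b [ZMOD p * ((p : ℤ) - 1)] :=
    Int.modEq_iff_dvd.mpr (hcop.mul_dvd hmodp.dvd hmodp1.dvd)
  rwa [Int.ModEq, Int.emod_eq_of_lt ha.1 ha.2.1, Int.emod_eq_of_lt hb.1 hb.2.1] at hmod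

theorem intCast_mul_intCast_eq (ha : a ∈ ruzsaSet p θ) (hb : b ∈ ruzsaSet p θ)
    (hc : c ∈ ruzsaSet p θ) (hd : d ∈ ruzsaSet p θ) (h : a + b ≡ c + d [ZMOD (p : ℤ) - 1]) :
    (a : ZMod p) * b = c * d := by
  rw [intCast_eq_zpow hp hu huθ ha, intCast_eq_zpow hp hu huθ hb, intCast_eq_zpow hp hu huθ hc,
    intCast_eq_zpow hp hu huθ hd, ← Units.val_mul, ← Units.val_mul, ← zpow_add, ← zpow_add,
    (hu.zpow_eq_zpow_iff_modEq_sub_one hp).mpr h]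

end

end ruzsaSet

theorem ruzsa_sidon_construction_general (p : ℕ) (hp : p.Prime)
    (θ : ℤ) (hθ : IsPrimitiveRoot (θ : ZMod p) (p - 1)) :
    ∀ k : ℤ,
      {q : ℤ × ℤ |
        (q.1 ∈ {a : ℤ | 0 ≤ a ∧ a < (p : ℤ) * (p - 1) ∧
          ∃ t ∈ Finset.Icc 1 (p - 1), a ≡ (t : ℤ) [ZMOD ((p : ℤ) - 1)] ∧
            a ≡ θ ^ t [ZMOD (p : ℤ)]}) ∧
        (q.2 ∈ {a : ℤ | 0 ≤ a ∧ a < (p : ℤ) * (p - 1) ∧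
          ∃ t ∈ Finset.Icc 1 (p - 1), a ≡ (t : ℤ) [ZMOD ((p : ℤ) - 1)] ∧
            a ≡ θ ^ t [ZMOD (p : ℤ)]}) ∧
        q.1 + q.2 ≡ k [ZMOD ((p : ℤ) ^ 2 - p)]}.encard ≤ 2 := by
  intro k
  have : Fact p.Prime := ⟨hp⟩
  have hp1 : 1 ≤ p := hp.one_lt.le
  obtain ⟨u, huθ⟩ := hθ.isUnit (Nat.sub_ne_zero_of_lt hp.one_lt)
  have hu : IsPrimitiveRoot u (p - 1) := IsPrimitiveRoot.coe_units_iff.mp (huθ ▸ hθ)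
  change {q : ℤ × ℤ | q.1 ∈ ruzsaSet p θ ∧ q.2 ∈ ruzsaSet p θ ∧
    q.1 + q.2 ≡ k [ZMOD (p : ℤ) ^ 2 - p]}.encard ≤ 2
  refine Set.encard_le_two_of_forall_eq_or_eq_swap ?_
  rintro ⟨x, y⟩ ⟨hx, hy, hxy⟩ ⟨x', y'⟩ ⟨hx', hy', hxy'⟩
  have hsum : x + y ≡ x' + y' [ZMOD p * ((p : ℤ) - 1)] := by
    rw [show (p : ℤ) * (p - 1) = p ^ 2 - p by ring]
    exact hxy.trans hxy'.symm
  have hadd : (x : ZMod p) + y = x' + y' := by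
    exact_mod_cast (ZMod.intCast_eq_intCast_iff _ _ _).mpr (hsum.of_mul_right _)
  have hmul := ruzsaSet.intCast_mul_intCast_eq hp1 hu huθ hx hy hx' hy' (hsum.of_mul_left _)
  have hinj : ∀ {a b : ℤ}, a ∈ ruzsaSet p θ → b ∈ ruzsaSet p θ → (a : ZMod p) = b → a = b :=
    ruzsaSet.eq_of_intCast_eq hp1 hu huθ
  rcases eq_and_eq_or_eq_and_eq_of_add_eq_add_of_mul_eq_mul hadd hmul with ⟨h1, h2⟩ | ⟨h1, h2⟩
  · exact Or.inl (Prod.ext (hinj hx hx' h1).symm (hinj hy hy' h2).symm)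
  · exact Or.inr (Prod.ext (hinj hy hx' h2).symm (hinj hx hy' h1).symm)

theorem ruzsa_sidon_construction (p : ℕ) (hp : p.Prime) (hodd : Odd p)
    (θ : ℤ) (hθ : IsPrimitiveRoot (θ : ZMod p) (p - 1)) :
    ∀ k : ℤ,
      {q : ℤ × ℤ |
        (q.1 ∈ {a : ℤ | 0 ≤ a ∧ a < (p : ℤ) * (p - 1) ∧
          ∃ t ∈ Finset.Icc 1 (p - 1), a ≡ (t : ℤ) [ZMOD ((p : ℤ) - 1)] ∧
            a ≡ θ ^ t [ZMOD (p : ℤ)]}) ∧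
        (q.2 ∈ {a : ℤ | 0 ≤ a ∧ a < (p : ℤ) * (p - 1) ∧
          ∃ t ∈ Finset.Icc 1 (p - 1), a ≡ (t : ℤ) [ZMOD ((p : ℤ) - 1)] ∧
            a ≡ θ ^ t [ZMOD (p : ℤ)]}) ∧
        q.1 + q.2 ≡ k [ZMOD ((p : ℤ) ^ 2 - p)]}.encard ≤ 2 :=
  ruzsa_sidon_construction_general p hp θ hθ
end

section
/- If A and B are sets of integers, A is a B*_2[g] set (at most g ordered representations of every integer as a sum of two elements of A), and B is a B*_2[f] set, and if x, y are coprime positive integers with A ⊆ Z/xZ a B*_2[g] set mod x and B ⊆ Z/yZ a B*_2[f] set mod y, then the set C = {c ∈ Z/xyZ : c ≡ a mod x for some a ∈ A and c ≡ b mod y for some b ∈ B} is a B*_2[gf] set mod xy with |C| = |A|·|B|. Consequently C_2(gf, xy) ≥ C_2(g,x)·C_2(f,y). -/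
/-- Number of ordered representations of `k` as a sum of two elements of `A`. -/
def repCount {n : ℕ} (A : Finset (ZMod n)) (k : ZMod n) : ℕ :=
  ((A ×ˢ A).filter fun p => p.1 + p.2 = k).card

/-- `C₂ g n` : the largest cardinality of a `B₂*[g]` set in `ℤ/nℤ`. -/
noncomputable def C2 (g n : ℕ) : ℕ :=
  sSup {r : ℕ | ∃ A : Finset (ZMod n), (∀ k, repCount A k ≤ g) ∧ A.card = r}

lemma image_card_eq {x y : ℕ} (hxy : Nat.Coprime x y)
    (A : Finset (ZMod x)) (B : Finset (ZMod y)) :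
    ((A ×ˢ B).image fun p =>
        (ZMod.chineseRemainder hxy).symm (p.1, p.2)).card = A.card * B.card := by
  rw [Finset.card_image_of_injective _ (fun p q h => by
    have := (ZMod.chineseRemainder hxy).symm.injective h
    exact Prod.ext (congrArg Prod.fst this) (congrArg Prod.snd this))]
  exact Finset.card_product A B

lemma repCount_image {x y g f : ℕ} (hxy : Nat.Coprime x y)
    (A : Finset (ZMod x)) (hA : ∀ k, repCount A k ≤ g)
    (B : Finset (ZMod y)) (hB : ∀ k, repCount B k ≤ f) (k : ZMod (x * y)) :
    repCount ((A ×ˢ B).image fun p =>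
        (ZMod.chineseRemainder hxy).symm (p.1, p.2)) k ≤ g * f := by
  set e := (ZMod.chineseRemainder hxy).symm with he
  set C := (A ×ˢ B).image fun p => e (p.1, p.2) with hC
  set k₁ := (ZMod.chineseRemainder hxy k).1 with hk1
  set k₂ := (ZMod.chineseRemainder hxy k).2 with hk2
  have hk : e (k₁, k₂) = k := by
    simp [e, k₁, k₂]
  have key : repCount C k = repCount A k₁ * repCount B k₂ := by
    unfold repCount
    rw [← Finset.card_product]
    symm
    apply Finset.card_bij (fun q _ => (e (q.1.1, q.2.1), e (q.1.2, q.2.2)))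
    · rintro ⟨⟨a, a'⟩, b, b'⟩ hq
      simp only [Finset.mem_product, Finset.mem_filter] at hq
      obtain ⟨⟨⟨ha, ha'⟩, hs1⟩, ⟨hb, hb'⟩, hs2⟩ := hq
      simp only [Finset.mem_filter, Finset.mem_product, hC, Finset.mem_image]
      refine ⟨⟨⟨(a, b), by simp [ha, hb], rfl⟩, ⟨(a', b'), by simp [ha', hb'], rfl⟩⟩, ?_⟩
      rw [← hk, ← map_add]
      simp [Prod.ext_iff] at hs1 hs2 ⊢
      exact ⟨hs1, hs2⟩
    · rintro ⟨⟨a, a'⟩, b, b'⟩ hq ⟨⟨c, c'⟩, d, d'⟩ hq' hh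
      simp only [Prod.ext_iff] at hh
      have h1 := e.injective hh.1
      have h2 := e.injective hh.2
      simp only [Prod.ext_iff] at h1 h2 ⊢
      exact ⟨⟨h1.1, h2.1⟩, h1.2, h2.2⟩
    · rintro ⟨c, c'⟩ hcc
      simp only [Finset.mem_filter, Finset.mem_product, hC, Finset.mem_image] at hcc
      obtain ⟨⟨⟨⟨a, b⟩, hab, hc⟩, ⟨⟨a', b'⟩, hab', hc'⟩⟩, hs⟩ := hcc
      simp only [Finset.mem_product] at hab hab'
      refine ⟨⟨(a, a'), (b, b')⟩, ?_, by simp [hc, hc']⟩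
      have : e (a + a', b + b') = e (k₁, k₂) := by
        rw [hk, ← hs, ← hc, ← hc', ← map_add]
        rfl
      have := e.injective this
      simp only [Prod.ext_iff] at this
      simp only [Finset.mem_product, Finset.mem_filter]
      exact ⟨⟨⟨hab.1, hab'.1⟩, this.1⟩, ⟨hab.2, hab'.2⟩, this.2⟩
  rw [key]
  exact Nat.mul_le_mul (hA k₁) (hB k₂)

set_option maxHeartbeats 1000000 in
theorem crt_product_construction (x y g f : ℕ) (hx : 0 < x) (hy : 0 < y)
    (hxy : Nat.Coprime x y)
    (A : Finset (ZMod x)) (hA : ∀ k, repCount A k ≤ g)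
    (B : Finset (ZMod y)) (hB : ∀ k, repCount B k ≤ f) :
    (∀ k, repCount ((A ×ˢ B).image fun p =>
        (ZMod.chineseRemainder hxy).symm (p.1, p.2)) k ≤ g * f) ∧
    ((A ×ˢ B).image fun p =>
        (ZMod.chineseRemainder hxy).symm (p.1, p.2)).card = A.card * B.card ∧
    C2 g x * C2 f y ≤ C2 (g * f) (x * y) := by
  refine ⟨fun k => repCount_image hxy A hA B hB k, image_card_eq hxy A B, ?_⟩
  haveI : NeZero x := ⟨hx.ne'⟩
  haveI : NeZero y := ⟨hy.ne'⟩
  haveI : NeZero (x * y) := ⟨by positivity⟩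
  -- the sets are nonempty and bounded above
  have hbdd : ∀ (g' n : ℕ) [NeZero n], BddAbove
      {r : ℕ | ∃ A : Finset (ZMod n), (∀ k, repCount A k ≤ g') ∧ A.card = r} := by
    intro g' n _
    refine ⟨Fintype.card (ZMod n), ?_⟩
    rintro r ⟨A, -, rfl⟩
    exact Finset.card_le_univ A
  have hne : ∀ (g' n : ℕ), ({r : ℕ | ∃ A : Finset (ZMod n),
      (∀ k, repCount A k ≤ g') ∧ A.card = r}).Nonempty := by
    intro g' n
    exact ⟨0, ∅, fun k => by simp [repCount], rfl⟩
  unfold C2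
  obtain ⟨A₀, hA₀, hcardA⟩ := Nat.sSup_mem (hne g x) (hbdd g x)
  obtain ⟨B₀, hB₀, hcardB⟩ := Nat.sSup_mem (hne f y) (hbdd f y)
  apply le_csSup (hbdd (g * f) (x * y))
  simp only [Set.mem_setOf_eq]
  refine ⟨(A₀ ×ˢ B₀).image fun p => (ZMod.chineseRemainder hxy).symm (p.1, p.2), ?_, ?_⟩
  · exact fun k => repCount_image hxy A₀ hA₀ B₀ hB₀ k
  · rw [image_card_eq hxy A₀ B₀, hcardA, hcardB]
end

section
/- If A ⊆ Z/nZ satisfies that every element of Z/nZ has at most g ordered representations as a+b with a,b ∈ A, and g is odd, then |A| ≤ sqrt(1 − 1/g)·sqrt(g·n) + 1. -/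
/-!
Swapping the two summands is an involution on the representations of `x` as `a + b` with
`a, b ∈ A`, whose fixed points are the `a ∈ A` with `a + a = x`. So if no such `a` exists, the
number of representations is even, hence at most `g - 1` because `g` is odd. Summing over `x`,
`|A|² ≤ (g - 1) n + |A|`, so `(|A| - 1)² ≤ (g - 1) n = (1 - 1/g) g n`.
-/

open Finset

namespace Finset

variable {G : Type*} [AddCommGroup G] [DecidableEq G]

lemma even_addConvolution_self_of_forall_add_self_ne {A : Finset G} {x : G}
    (h : ∀ a ∈ A, a + a ≠ x) : Even (A.addConvolution A x) := by
  rw [← ZMod.natCast_eq_zero_iff_even, addConvolution, card_eq_sum_ones, Nat.cast_sum]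
  refine sum_involution (fun p _ => p.swap) (fun _ _ => by decide) ?_ ?_ (fun _ _ => rfl)
  · rintro ⟨a, b⟩ hp _ hswap
    simp only [Prod.swap_prod_mk, Prod.mk.injEq] at hswap
    simp only [mem_filter, mem_product] at hp
    exact h a hp.1.1 (hswap.2 ▸ hp.2)
  · rintro ⟨a, b⟩ hp
    simp only [mem_filter, mem_product] at hp ⊢
    exact ⟨hp.1.symm, add_comm b a ▸ hp.2⟩

lemma addConvolution_self_le_of_odd {A : Finset G} {g : ℕ} (hg : Odd g)
    (hA : ∀ x, A.addConvolution A x ≤ g) (x : G) :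
    A.addConvolution A x ≤ g - 1 + #{a ∈ A | a + a = x} := by
  by_cases hdiag : ∃ a ∈ A, a + a = x
  · have : 0 < #{a ∈ A | a + a = x} := card_pos.mpr (by simpa [Finset.Nonempty] using hdiag)
    have := hA x
    omega
  · push Not at hdiag
    obtain ⟨c, hc⟩ := even_addConvolution_self_of_forall_add_self_ne hdiag
    obtain ⟨d, hd⟩ := hg
    have := hA x
    omega

lemma sum_addConvolution [Fintype G] (A B : Finset G) :
    ∑ x, A.addConvolution B x = #A * #B := by
  rw [← card_product]
  exact (card_eq_sum_card_fiberwise fun _ _ => mem_univ _).symm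

lemma card_sq_le_of_addConvolution_self_le [Fintype G] {A : Finset G} {g : ℕ} (hg : Odd g)
    (hA : ∀ x, A.addConvolution A x ≤ g) :
    #A ^ 2 ≤ (g - 1) * Fintype.card G + #A :=
  calc #A ^ 2 = ∑ x, A.addConvolution A x := by rw [sum_addConvolution, sq]
    _ ≤ ∑ x, (g - 1 + #{a ∈ A | a + a = x}) :=
        sum_le_sum fun x _ => addConvolution_self_le_of_odd hg hA x
    _ = (g - 1) * Fintype.card G + #A := by
        rw [sum_add_distrib, sum_const, card_univ, smul_eq_mul, mul_comm,
          ← card_eq_sum_card_fiberwise fun _ _ => mem_univ _]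

end Finset

lemma le_sqrt_one_sub_inv_mul_sqrt_add_one {m g N : ℕ} (hg : 1 ≤ g)
    (h : m ^ 2 ≤ (g - 1) * N + m) :
    (m : ℝ) ≤ √(1 - 1 / g) * √(g * N) + 1 := by
  rcases Nat.eq_zero_or_pos m with rfl | hm
  · simp only [Nat.cast_zero]
    positivity
  have hgR : (1 : ℝ) ≤ g := by exact_mod_cast hg
  have hmR : (1 : ℝ) ≤ m := by exact_mod_cast hm
  have hR : (m : ℝ) ^ 2 ≤ ((g : ℝ) - 1) * N + m := by
    have : ((m ^ 2 : ℕ) : ℝ) ≤ (((g - 1) * N + m : ℕ) : ℝ) := by exact_mod_cast h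
    push_cast [Nat.cast_sub hg] at this
    exact this
  have hsqrt : √(1 - 1 / g) * √(g * N) = √(((g : ℝ) - 1) * N) := by
    rw [← Real.sqrt_mul (sub_nonneg.mpr (div_le_one_of_le₀ hgR (by positivity)))]
    congr 1
    field_simp
  rw [hsqrt, ← sub_le_iff_le_add]
  exact Real.le_sqrt_of_sq_le (by nlinarith)

theorem b2g_mod_bound_odd (n g : ℕ) (hn : 0 < n) (hg : Odd g)
    (A : Finset (ZMod n))
    (hA : ∀ k : ZMod n, ((A ×ˢ A).filter fun p => p.1 + p.2 = k).card ≤ g) :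
    (A.card : ℝ) ≤ Real.sqrt (1 - 1 / g) * Real.sqrt (g * n) + 1 := by
  have : NeZero n := ⟨hn.ne'⟩
  have hcard := card_sq_le_of_addConvolution_self_le hg hA
  rw [ZMod.card] at hcard
  exact le_sqrt_one_sub_inv_mul_sqrt_add_one hg.pos hcard
end

section
/- Let p be a prime and for 1 ≤ k < p let (k²) denote the unique integer in [1, p−1] congruent to k² mod p. Then the set {2pk + (k²) : 1 ≤ k ≤ p−1} is a Sidon set of integers contained in the interval [2p+1, 2p(p−1)+1]. -/
section ET

variable (p : ℕ)

private lemma et_mod_pos (hp : p.Prime) {k : ℕ} (hk : k ∈ Finset.Icc 1 (p - 1)) :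
    1 ≤ k ^ 2 % p ∧ k ^ 2 % p < p := by
  have hp2 : 2 ≤ p := hp.two_le
  rw [Finset.mem_Icc] at hk
  have hkp : k < p := by omega
  have hlt : k ^ 2 % p < p := Nat.mod_lt _ (by omega)
  refine ⟨?_, hlt⟩
  by_contra h
  have h0 : k ^ 2 % p = 0 := by omega
  have hdvd : p ∣ k ^ 2 := Nat.dvd_of_mod_eq_zero h0
  have hdk : p ∣ k := hp.dvd_of_dvd_pow hdvd
  have := Nat.le_of_dvd (by omega) hdk
  omega

private lemma et_key (hp : p.Prime) {k1 k2 k3 k4 : ℕ}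
    (h1 : k1 ∈ Finset.Icc 1 (p - 1)) (h2 : k2 ∈ Finset.Icc 1 (p - 1))
    (h3 : k3 ∈ Finset.Icc 1 (p - 1)) (h4 : k4 ∈ Finset.Icc 1 (p - 1))
    (heq : 2 * p * k1 + k1 ^ 2 % p + (2 * p * k2 + k2 ^ 2 % p)
         = 2 * p * k3 + k3 ^ 2 % p + (2 * p * k4 + k4 ^ 2 % p)) :
    (k1 = k3 ∧ k2 = k4) ∨ (k1 = k4 ∧ k2 = k3) := by
  have hp2 : 2 ≤ p := hp.two_le
  obtain ⟨r1a, r1b⟩ := et_mod_pos p hp h1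
  obtain ⟨r2a, r2b⟩ := et_mod_pos p hp h2
  obtain ⟨r3a, r3b⟩ := et_mod_pos p hp h3
  obtain ⟨r4a, r4b⟩ := et_mod_pos p hp h4
  rw [Finset.mem_Icc] at h1 h2 h3 h4
  -- rewrite the equation in grouped form
  have heq' : 2 * p * (k1 + k2) + (k1 ^ 2 % p + k2 ^ 2 % p)
      = 2 * p * (k3 + k4) + (k3 ^ 2 % p + k4 ^ 2 % p) := by ring_nf; ring_nf at heq; omega
  have hs : k1 + k2 = k3 + k4 := by
    have hd := congrArg (· / (2 * p)) heq'
    simp only [Nat.mul_add_div (by omega : 0 < 2 * p)] at hd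
    rw [Nat.div_eq_of_lt (by omega), Nat.div_eq_of_lt (by omega)] at hd
    omega
  have hr : k1 ^ 2 % p + k2 ^ 2 % p = k3 ^ 2 % p + k4 ^ 2 % p := by
    rw [hs] at heq'; omega
  -- handle p = 2 trivially
  rcases eq_or_lt_of_le hp2 with hp2' | hp3
  · left; omega
  haveI : Fact p.Prime := ⟨hp⟩
  set x1 : ZMod p := (k1 : ZMod p)
  set x2 : ZMod p := (k2 : ZMod p)
  set x3 : ZMod p := (k3 : ZMod p)
  set x4 : ZMod p := (k4 : ZMod p)
  have hsum : x1 + x2 = x3 + x4 := by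
    have := congrArg (fun n : ℕ => (n : ZMod p)) hs
    push_cast at this
    exact this
  have hsq : x1 ^ 2 + x2 ^ 2 = x3 ^ 2 + x4 ^ 2 := by
    have := congrArg (fun n : ℕ => (n : ZMod p)) hr
    push_cast [ZMod.natCast_mod] at this
    exact this
  have htwo : (2 : ZMod p) ≠ 0 := by
    have : ((2 : ℕ) : ZMod p) ≠ 0 := by
      rw [Ne, ZMod.natCast_eq_zero_iff]
      intro hd
      have := Nat.le_of_dvd (by norm_num) hd
      omega
    simpa using this
  have hmul : x1 * x2 = x3 * x4 := by
    have h2m : 2 * (x1 * x2) = 2 * (x3 * x4) := by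
      have hsq2 : (x1 + x2) ^ 2 = (x3 + x4) ^ 2 := by rw [hsum]
      linear_combination hsq2 - hsq
    exact mul_left_cancel₀ htwo h2m
  have hzero : (x3 - x1) * (x3 - x2) = 0 := by
    linear_combination (-x3) * hsum + hmul
  have hval : ∀ a b : ℕ, a < p → b < p → (a : ZMod p) = (b : ZMod p) → a = b := by
    intro a b ha hb hab
    have := congrArg ZMod.val hab
    rwa [ZMod.val_cast_of_lt ha, ZMod.val_cast_of_lt hb] at this
  rcases mul_eq_zero.mp hzero with h | h
  · have e13 : x1 = x3 := by linear_combination -h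
    have e24 : x2 = x4 := by linear_combination hsum - e13
    left
    exact ⟨hval _ _ (by omega) (by omega) e13, hval _ _ (by omega) (by omega) e24⟩
  · have e23 : x2 = x3 := by linear_combination -h
    have e14 : x1 = x4 := by linear_combination hsum - e23
    right
    exact ⟨hval _ _ (by omega) (by omega) e14, hval _ _ (by omega) (by omega) e23⟩

end ET

theorem erdos_turan_construction (p : ℕ) (hp : p.Prime) :
    (∀ a ∈ (Finset.Icc 1 (p - 1)).image fun k => 2 * p * k + k ^ 2 % p,
     ∀ b ∈ (Finset.Icc 1 (p - 1)).image fun k => 2 * p * k + k ^ 2 % p,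
     ∀ c ∈ (Finset.Icc 1 (p - 1)).image fun k => 2 * p * k + k ^ 2 % p,
     ∀ d ∈ (Finset.Icc 1 (p - 1)).image fun k => 2 * p * k + k ^ 2 % p,
       a + b = c + d → (a = c ∧ b = d) ∨ (a = d ∧ b = c)) ∧
    ((Finset.Icc 1 (p - 1)).image fun k => 2 * p * k + k ^ 2 % p) ⊆
      Finset.Icc (2 * p + 1) (2 * p * (p - 1) + 1) := by
  have hp2 : 2 ≤ p := hp.two_le
  constructor
  · intro a ha b hb c hc d hd habcd
    simp only [Finset.mem_image] at ha hb hc hd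
    obtain ⟨k1, hk1, rfl⟩ := ha
    obtain ⟨k2, hk2, rfl⟩ := hb
    obtain ⟨k3, hk3, rfl⟩ := hc
    obtain ⟨k4, hk4, rfl⟩ := hd
    rcases et_key p hp hk1 hk2 hk3 hk4 habcd with ⟨e1, e2⟩ | ⟨e1, e2⟩
    · left; rw [e1, e2]; exact ⟨rfl, rfl⟩
    · right; rw [e1, e2]; exact ⟨rfl, rfl⟩
  · intro x hx
    simp only [Finset.mem_image] at hx
    obtain ⟨k, hk, rfl⟩ := hx
    obtain ⟨hr1, hr2⟩ := et_mod_pos p hp hk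
    rw [Finset.mem_Icc] at hk ⊢
    constructor
    · nlinarith [hk.1]
    · rcases eq_or_lt_of_le hk.2 with he | hlt
      · -- k = p - 1, residue is 1
        have hke : k = p - 1 := he
        have hres : k ^ 2 % p = 1 := by
          have : k ^ 2 = p * (p - 2) + 1 := by
            subst hke
            have : p - 1 + 1 = p := by omega
            nlinarith [Nat.sub_add_cancel (by omega : 1 ≤ p),
              Nat.sub_add_cancel (by omega : 2 ≤ p)]
          rw [this, Nat.mul_add_mod, Nat.mod_eq_of_lt (by omega)]
        rw [hres, hke]
      · -- k ≤ p - 2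
        have hk2' : k ≤ p - 2 := by omega
        have h1 : 2 * p * k ≤ 2 * p * (p - 2) := Nat.mul_le_mul_left _ hk2'
        have h2 : 2 * p * (p - 2) + 2 * p = 2 * p * (p - 1) := by
          rw [← Nat.mul_succ]
          congr 1
          omega
        omega
end

section
/- Let q be a prime power and θ a generator of the multiplicative group of GF(q²). Then the set A = {a : 1 ≤ a ≤ q²−1, θ^a − θ ∈ GF(q)} is a Sidon set modulo q²−1 of cardinality q. -/
theorem bose_construction (p n q : ℕ) (hp : p.Prime) (hn : 0 < n) (hq : q = p ^ n)
    (F : Type*) [Field F] [Fintype F] [DecidableEq F] (hF : Fintype.card F = q ^ 2)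
    (θ : F) (hθ : orderOf θ = q ^ 2 - 1)
    (A : Finset ℕ)
    (hAdef : A = (Finset.Icc 1 (q ^ 2 - 1)).filter fun a => (θ ^ a - θ) ^ q = θ ^ a - θ) :
    A.card = q ∧
    ∀ k : ZMod (q ^ 2 - 1),
      ((A ×ˢ A).filter
        (fun pr => ((pr.1 : ZMod (q ^ 2 - 1)) + (pr.2 : ZMod (q ^ 2 - 1)) = k))).card ≤ 2 := by
  haveI := Fact.mk hp
  have hq2 : 2 ≤ q := by
    subst hq
    calc 2 ≤ p := hp.two_le
    _ ≤ p ^ n := Nat.le_self_pow hn.ne' p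
  set m := q ^ 2 - 1 with hm
  have hmq : m + 1 = q ^ 2 := by
    have : 1 ≤ q ^ 2 := Nat.one_le_pow _ _ (by omega)
    omega
  have hm3 : 3 ≤ m := by nlinarith [hmq]
  have hmfac : m = (q - 1) * (q + 1) := by
    rw [hm]
    zify [show 1 ≤ q ^ 2 by omega, show 1 ≤ q by omega]
    ring
  -- characteristic
  have hcharF : CharP F p := by
    obtain ⟨r, hr⟩ := CharP.exists F
    haveI := hr
    have hrp : r.Prime := CharP.char_is_prime F r
    obtain ⟨k, -, hk⟩ := FiniteField.card F r
    have hdvd : r ∣ p := by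
      have : r ∣ Fintype.card F := hk ▸ dvd_pow_self r k.ne_zero
      rw [hF, hq, ← pow_mul] at this
      exact hrp.dvd_of_dvd_pow this
    have : r = p := ((Nat.prime_dvd_prime_iff_eq hrp hp).mp hdvd)
    rwa [this] at hr
  haveI := hcharF
  have hfadd : ∀ x y : F, (x + y) ^ q = x ^ q + y ^ q := by
    intro x y; rw [hq]; exact add_pow_char_pow x y p n
  have hfsub : ∀ x y : F, (x - y) ^ q = x ^ q - y ^ q := by
    intro x y; rw [hq]; exact sub_pow_char_pow x y n (p := p)
  -- θ is a unit of order m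
  have hθm : θ ^ m = 1 := by rw [← hθ]; exact pow_orderOf_eq_one θ
  have hθ0 : θ ≠ 0 := by
    intro h; rw [h, zero_pow (by omega : m ≠ 0)] at hθm; exact one_ne_zero hθm.symm
  set u : Fˣ := Units.mk0 θ hθ0 with hu
  have hucoe : (u : F) = θ := rfl
  have huord : orderOf u = m := by rw [← orderOf_units, hucoe, hθ]
  have hupow : ∀ i : ℕ, ((u ^ i : Fˣ) : F) = θ ^ i := fun i => by
    rw [Units.val_pow_eq_pow_val, hucoe]
  have hpow_iff : ∀ i j : ℕ, θ ^ i = θ ^ j ↔ i ≡ j [MOD m] := by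
    intro i j
    rw [← hupow, ← hupow, ← Units.ext_iff, pow_eq_pow_iff_modEq, huord]
  have hinj : ∀ a ∈ Finset.Icc 1 m, ∀ b ∈ Finset.Icc 1 m, θ ^ a = θ ^ b → a = b := by
    intro a ha b hb h
    rw [Finset.mem_Icc] at ha hb
    have h' := (hpow_iff a b).mp h
    rcases le_total a b with hab | hab
    · have hd := (Nat.modEq_iff_dvd' hab).mp h'
      rcases Nat.eq_zero_or_pos (b - a) with h0 | h0
      · omega
      · have := Nat.le_of_dvd h0 hd
        omega
    · have hd := (Nat.modEq_iff_dvd' hab).mp h'.symm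
      rcases Nat.eq_zero_or_pos (a - b) with h0 | h0
      · omega
      · have := Nat.le_of_dvd h0 hd
        omega
  have hcardU : Fintype.card Fˣ = m := by rw [Fintype.card_units, hF]
  have hsurj : ∀ x : F, x ≠ 0 → ∃ a, a ∈ Finset.Icc 1 m ∧ θ ^ a = x := by
    intro x hx
    have hbij : Function.Bijective (fun i : Fin m => u ^ (i : ℕ)) := by
      rw [Fintype.bijective_iff_injective_and_card]
      constructor
      · intro i j hij
        have hij' : u ^ (i : ℕ) = u ^ (j : ℕ) := hij
        have h' : (i : ℕ) ≡ (j : ℕ) [MOD m] := by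
          have h2 := pow_eq_pow_iff_modEq.mp hij'
          rwa [huord] at h2
        have : (i : ℕ) % m = (j : ℕ) % m := h'
        rw [Nat.mod_eq_of_lt i.isLt, Nat.mod_eq_of_lt j.isLt] at this
        exact Fin.ext this
      · simp [hcardU]
    obtain ⟨i, hi⟩ := hbij.2 (Units.mk0 x hx)
    have hix : θ ^ (i : ℕ) = x := by
      rw [← hupow]; exact congrArg Units.val hi
    rcases Nat.eq_zero_or_pos (i : ℕ) with h0 | h0
    · refine ⟨m, by rw [Finset.mem_Icc]; omega, ?_⟩
      rw [hθm, ← hix, h0, pow_zero]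
    · exact ⟨i, by rw [Finset.mem_Icc]; exact ⟨h0, le_of_lt i.isLt⟩, hix⟩
  have hθq : θ ^ q ≠ θ := by
    intro h
    have h1 : θ ^ q = θ ^ 1 := by simpa using h
    have h2 := ((hpow_iff q 1).mp h1).symm
    have hd := (Nat.modEq_iff_dvd' (by omega : 1 ≤ q)).mp h2
    have hlt : q - 1 < m := by nlinarith [hmq]
    have := Nat.eq_zero_of_dvd_of_lt hd hlt
    omega
  -- the subfield as a finset
  set Kf : Finset F := Finset.univ.filter (fun c => c ^ q = c) with hKf
  have hKcard : Kf.card = q := by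
    have himg : Kf = insert 0 ((Finset.Icc 1 (q - 1)).image (fun j => θ ^ (j * (q + 1)))) := by
      ext x
      simp only [hKf, Finset.mem_filter, Finset.mem_univ, true_and, Finset.mem_insert,
        Finset.mem_image, Finset.mem_Icc]
      constructor
      · intro hx
        by_cases hx0 : x = 0
        · exact Or.inl hx0
        · right
          obtain ⟨a, haI, rfl⟩ := hsurj x hx0
          rw [Finset.mem_Icc] at haI
          rw [← pow_mul] at hx
          have h1 := ((hpow_iff (a * q) a).mp hx).symm
          have hd := (Nat.modEq_iff_dvd' (Nat.le_mul_of_pos_right a (by omega))).mp h1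
          have heq : a * q - a = (q - 1) * a := by
            zify [show a ≤ a * q from Nat.le_mul_of_pos_right a (by omega),
              show 1 ≤ q by omega]
            ring
          rw [heq, hmfac] at hd
          have hd2 : (q + 1) ∣ a :=
            (mul_dvd_mul_iff_left (show (q - 1 : ℕ) ≠ 0 by omega)).mp hd
          obtain ⟨j, rfl⟩ := hd2
          have hj1 : 1 ≤ j := by
            rcases Nat.eq_zero_or_pos j with rfl | h0
            · simp at haI
            · exact h0
          have hj2 : j ≤ q - 1 := by
            have hle : (q + 1) * j ≤ (q - 1) * (q + 1) := hmfac ▸ haI.2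
            have hle2 : (q + 1) * j ≤ (q + 1) * (q - 1) := by
              calc (q + 1) * j ≤ (q - 1) * (q + 1) := hle
                _ = (q + 1) * (q - 1) := by ring
            exact Nat.le_of_mul_le_mul_left hle2 (by omega)
          exact ⟨j, ⟨hj1, hj2⟩, by rw [mul_comm]⟩
      · rintro (rfl | ⟨j, hj, rfl⟩)
        · exact zero_pow (by omega : q ≠ 0)
        · rw [← pow_mul]
          apply (hpow_iff (j * (q + 1) * q) (j * (q + 1))).mpr
          apply ((Nat.modEq_iff_dvd' (Nat.le_mul_of_pos_right _ (by omega))).mpr _).symm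
          refine ⟨j, ?_⟩
          rw [hmfac]
          zify [show j * (q + 1) ≤ j * (q + 1) * q from Nat.le_mul_of_pos_right _ (by omega),
            show 1 ≤ q by omega]
          ring
    rw [himg]
    rw [Finset.card_insert_of_notMem, Finset.card_image_of_injOn]
    · rw [Nat.card_Icc]; omega
    · intro j hj j' hj' hjj
      rw [Finset.mem_coe, Finset.mem_Icc] at hj hj'
      have h1 : j * (q + 1) ∈ Finset.Icc 1 m := by
        rw [Finset.mem_Icc, hmfac]
        refine ⟨by nlinarith [hj.1], ?_⟩
        calc j * (q + 1) ≤ (q - 1) * (q + 1) := Nat.mul_le_mul_right _ hj.2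
          _ = (q - 1) * (q + 1) := rfl
      have h2 : j' * (q + 1) ∈ Finset.Icc 1 m := by
        rw [Finset.mem_Icc, hmfac]
        exact ⟨by nlinarith [hj'.1], Nat.mul_le_mul_right _ hj'.2⟩
      have := hinj _ h1 _ h2 hjj
      exact Nat.eq_of_mul_eq_mul_right (by omega) this
    · intro hmem
      rw [Finset.mem_image] at hmem
      obtain ⟨j, -, hj⟩ := hmem
      exact pow_ne_zero _ hθ0 hj
  -- membership facts for A
  have hAsub : ∀ a ∈ A, a ∈ Finset.Icc 1 m := by
    intro a ha; rw [hAdef] at ha; exact (Finset.mem_filter.1 ha).1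
  have hAfix : ∀ a ∈ A, (θ ^ a - θ) ^ q = θ ^ a - θ := by
    intro a ha; rw [hAdef] at ha; exact (Finset.mem_filter.1 ha).2
  -- part 1 : cardinality
  have hAcard : A.card = q := by
    rw [← hKcard]
    apply Finset.card_bij (fun a _ => θ ^ a - θ)
    · intro a ha
      rw [hKf, Finset.mem_filter]
      exact ⟨Finset.mem_univ _, hAfix a ha⟩
    · intro a ha b hb h
      exact hinj a (hAsub a ha) b (hAsub b hb) (sub_left_inj.mp h)
    · intro c hc
      rw [hKf, Finset.mem_filter] at hc
      have hcq : c ^ q = c := hc.2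
      have hcθ : c + θ ≠ 0 := by
        intro h0
        have hθc : θ = -c := by linear_combination h0
        have h1 : θ ^ q = -θ ∨ θ ^ q = θ := by
          rcases Nat.even_or_odd q with he | ho
          · left; rw [hθc, he.neg_pow, hcq]; ring
          · right; rw [hθc, ho.neg_pow, hcq]
        rcases h1 with h1 | h1
        · have h2 : θ ^ (2 * q) = θ ^ 2 := by
            rw [show 2 * q = q * 2 from mul_comm 2 q, pow_mul, h1]; ring
          have h3 := ((hpow_iff (2 * q) 2).mp h2).symm
          have hd := (Nat.modEq_iff_dvd' (by omega : 2 ≤ 2 * q)).mp h3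
          have heq : 2 * q - 2 = (q - 1) * 2 := by omega
          rw [heq, hmfac] at hd
          have hdd : (q + 1) ∣ 2 :=
            (mul_dvd_mul_iff_left (show (q - 1 : ℕ) ≠ 0 by omega)).mp hd
          have := Nat.le_of_dvd (by omega) hdd
          omega
        · exact hθq h1
      obtain ⟨a, haI, hax⟩ := hsurj (c + θ) hcθ
      have haA : a ∈ A := by
        rw [hAdef, Finset.mem_filter]
        refine ⟨haI, ?_⟩
        rw [hax]
        have hcc : c + θ - θ = c := by ring
        rw [hcc, hcq]
      exact ⟨a, haA, by rw [hax]; ring⟩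
  refine ⟨hAcard, ?_⟩
  -- part 2 : Sidon property
  intro k
  set P := (A ×ˢ A).filter
    (fun pr : ℕ × ℕ => ((pr.1 : ZMod m) + (pr.2 : ZMod m) = k)) with hPdef
  rcases P.eq_empty_or_nonempty with hPe | ⟨⟨a, b⟩, hab⟩
  · simp [hPe]
  have key : ∀ pr ∈ P, pr = (a, b) ∨ pr = (b, a) := by
    rintro ⟨a', b'⟩ h'
    rw [hPdef, Finset.mem_filter, Finset.mem_product] at hab h'
    obtain ⟨⟨haA, hbA⟩, hk1⟩ := hab
    obtain ⟨⟨haA', hbA'⟩, hk2⟩ := h'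
    simp only at hk1 hk2
    have hmodeq : (a + b) ≡ (a' + b') [MOD m] := by
      apply (ZMod.natCast_eq_natCast_iff _ _ _).mp
      push_cast
      rw [hk1, hk2]
    have hpp : θ ^ a * θ ^ b = θ ^ a' * θ ^ b' := by
      rw [← pow_add, ← pow_add]
      exact (hpow_iff _ _).mpr hmodeq
    set ca := θ ^ a - θ with hca_def
    set cb := θ ^ b - θ with hcb_def
    set ca' := θ ^ a' - θ with hca'_def
    set cb' := θ ^ b' - θ with hcb'_def
    have hca : ca ^ q = ca := by rw [hca_def]; exact hAfix a haA
    have hcb : cb ^ q = cb := by rw [hcb_def]; exact hAfix b hbA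
    have hca' : ca' ^ q = ca' := by rw [hca'_def]; exact hAfix a' haA'
    have hcb' : cb' ^ q = cb' := by rw [hcb'_def]; exact hAfix b' hbA'
    set s := (ca + cb) - (ca' + cb') with hs_def
    set t := ca' * cb' - ca * cb with ht_def
    have h_lin : s * θ = t := by
      rw [hs_def, ht_def, hca_def, hcb_def, hca'_def, hcb'_def]
      linear_combination hpp
    have hs : s ^ q = s := by
      rw [hs_def, hfsub, hfadd, hfadd, hca, hcb, hca', hcb']
    have ht : t ^ q = t := by
      rw [ht_def, hfsub, mul_pow, mul_pow, hca, hcb, hca', hcb']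
    by_cases hs0 : s = 0
    · have ht0 : t = 0 := by rw [← h_lin, hs0, zero_mul]
      have hsum : ca + cb = ca' + cb' := sub_eq_zero.mp hs0
      have hmul : ca' * cb' = ca * cb := sub_eq_zero.mp ht0
      have hquad : (ca' - ca) * (ca' - cb) = 0 := by
        linear_combination (-ca') * hsum - hmul
      rcases mul_eq_zero.mp hquad with h1 | h1
      · left
        have hcc : ca' = ca := sub_eq_zero.mp h1
        have ha' : a' = a := by
          apply hinj a' (hAsub a' haA') a (hAsub a haA)
          have h2 : θ ^ a' - θ = θ ^ a - θ := hcc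
          linear_combination h2
        have hcc2 : cb' = cb := by linear_combination hsum.symm - hcc
        have hb' : b' = b := by
          apply hinj b' (hAsub b' hbA') b (hAsub b hbA)
          have h4 : θ ^ b' - θ = θ ^ b - θ := hcc2
          linear_combination h4
        rw [ha', hb']
      · right
        have hcc : ca' = cb := sub_eq_zero.mp h1
        have ha' : a' = b := by
          apply hinj a' (hAsub a' haA') b (hAsub b hbA)
          have h2 : θ ^ a' - θ = θ ^ b - θ := hcc
          linear_combination h2
        have hcc2 : cb' = ca := by linear_combination hsum.symm - hcc
        have hb' : b' = a := by
          apply hinj b' (hAsub b' hbA') a (hAsub a haA)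
          have h4 : θ ^ b' - θ = θ ^ a - θ := hcc2
          linear_combination h4
        rw [ha', hb']
    · exfalso
      have hθeq : θ = s⁻¹ * t := by
        field_simp
        linear_combination h_lin
      apply hθq
      rw [hθeq, mul_pow, inv_pow, hs, ht]
  calc P.card ≤ ({(a, b), (b, a)} : Finset (ℕ × ℕ)).card := by
        apply Finset.card_le_card
        intro pr hpr
        rcases key pr hpr with h | h <;> simp [h]
    _ ≤ 2 := by
        apply le_trans (Finset.card_insert_le _ _)
        simp
end

section
/- If A is a B_h set in {1,...,n} and m a positive integer, and B = {0, 1, ..., m−1}, then the set mA + B = {m·a + b : a ∈ A, b ∈ B} is a B_h[h!·m^{h-1}]-type set: every integer has at most h!·m^{h-1} ordered representations as a sum of h elements of mA + B. -/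
/-!
Write each summand as `m * a + b` with `a ∈ A` and `b < m`. An ordered representation of `k`
is determined by its first `h - 1` residues `b_i` and the permutation sorting its `a_i`:
subtracting those residues from `k` leaves `m * ∑ a_i + b_h` with `b_h < m`, which fixes
`∑ a_i` and `b_h`; the `B_h` property then fixes the multiset of the `a_i`, and the sorting
permutation fixes their order. There are `m ^ (h - 1) * h!` such data.
-/

def IsBhSet {α : Type*} [AddCommMonoid α] (h : ℕ) (A : Set α) : Prop :=
  ∀ s t : Multiset α, Multiset.card s = h → Multiset.card t = h →
    (∀ x ∈ s, x ∈ A) → (∀ x ∈ t, x ∈ A) → s.sum = t.sum → s = t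

theorem IsBhSet.perm_ofFn_of_sum_eq {α : Type*} [AddCommMonoid α] {h : ℕ} {A : Set α}
    (hA : IsBhSet h A) {f g : Fin h → α} (hf : ∀ i, f i ∈ A) (hg : ∀ i, g i ∈ A)
    (hsum : ∑ i, f i = ∑ i, g i) : (List.ofFn f).Perm (List.ofFn g) := by
  refine Multiset.coe_eq_coe.mp (hA _ _ (by simp) (by simp) ?_ ?_ (by simpa [List.sum_ofFn]))
  · simpa [List.mem_ofFn] using hf
  · simpa [List.mem_ofFn] using hg

theorem Tuple.eq_of_perm_of_sort_eq {n : ℕ} {α : Type*} [LinearOrder α] {f g : Fin n → α}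
    (hperm : (List.ofFn f).Perm (List.ofFn g)) (hsort : Tuple.sort f = Tuple.sort g) :
    f = g := by
  have hsorted : f ∘ Tuple.sort f = g ∘ Tuple.sort g :=
    List.ofFn_injective <| List.Perm.eq_of_sortedLE
      (Tuple.monotone_sort f).sortedLE_ofFn (Tuple.monotone_sort g).sortedLE_ofFn <|
      ((Tuple.sort f).ofFn_comp_perm f).trans <| hperm.trans ((Tuple.sort g).ofFn_comp_perm g).symm
  rw [← hsort] at hsorted
  exact (Tuple.sort f).surjective.injective_comp_right hsorted

theorem Nat.eq_and_eq_of_mul_add_eq_mul_add {m q q' r r' : ℕ} (hr : r < m) (hr' : r' < m)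
    (heq : m * q + r = m * q' + r') : q = q' ∧ r = r' := by
  have hm : 0 < m := by omega
  obtain ⟨hq, hr⟩ := (Nat.div_mod_unique hm).mpr ⟨by rw [add_comm, heq], hr⟩
  obtain ⟨hq', hr'⟩ := (Nat.div_mod_unique hm).mpr ⟨add_comm r' _, hr'⟩
  exact ⟨hq.symm.trans hq', hr.symm.trans hr'⟩

theorem div_mem_and_mod_lt_of_mem_image {m x : ℕ} {A : Finset ℕ}
    (hx : x ∈ (A ×ˢ Finset.range m).image fun p => m * p.1 + p.2) : x / m ∈ A ∧ x % m < m := by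
  obtain ⟨⟨a, b⟩, hab, rfl⟩ := Finset.mem_image.mp hx
  rw [Finset.mem_product, Finset.mem_range] at hab
  have hm : 0 < m := by omega
  rw [Nat.mul_add_div hm, Nat.div_eq_of_lt hab.2, add_zero, mul_comm, Nat.mul_add_mod_of_lt hab.2]
  exact hab

theorem Nat.sum_eq_mul_sum_div_add_sum_mod {ι : Type*} (s : Finset ι) (f : ι → ℕ) (m : ℕ) :
    ∑ i ∈ s, f i = m * ∑ i ∈ s, f i / m + ∑ i ∈ s, f i % m := by
  rw [Finset.mul_sum, ← Finset.sum_add_distrib]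
  exact Finset.sum_congr rfl fun i _ => (Nat.div_add_mod (f i) m).symm

theorem eq_of_sum_eq_of_init_mod_eq_of_sort_div_eq {n m : ℕ} {A : Finset ℕ}
    (hA : IsBhSet (n + 1) (A : Set ℕ)) {f g : Fin (n + 1) → ℕ}
    (hf : ∀ i, f i / m ∈ A ∧ f i % m < m) (hg : ∀ i, g i / m ∈ A ∧ g i % m < m)
    (hsum : ∑ i, f i = ∑ i, g i) (hinit : ∀ i : Fin n, f i.castSucc % m = g i.castSucc % m)
    (hsort : Tuple.sort (f · / m) = Tuple.sort (g · / m)) : f = g := by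
  have hsplit (f : Fin (n + 1) → ℕ) : ∑ i, f i =
      m * ∑ i, f i / m + ((∑ i : Fin n, f i.castSucc % m) + f (Fin.last n) % m) := by
    rw [Nat.sum_eq_mul_sum_div_add_sum_mod _ _ m, Fin.sum_univ_castSucc (f · % m)]
  rw [hsplit f, hsplit g, Fintype.sum_congr _ _ hinit] at hsum
  obtain ⟨hsum_div, hlast⟩ := Nat.eq_and_eq_of_mul_add_eq_mul_add (hf _).2 (hg _).2
    (show m * ∑ i, f i / m + f (Fin.last n) % m = m * ∑ i, g i / m + g (Fin.last n) % m by omega)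
  have hmod (i : Fin (n + 1)) : f i % m = g i % m := Fin.lastCases hlast hinit i
  have hdiv (i : Fin (n + 1)) : f i / m = g i / m := congrFun (Tuple.eq_of_perm_of_sort_eq
    (hA.perm_ofFn_of_sum_eq (fun i => (hf i).1) (fun i => (hg i).1) hsum_div) hsort) i
  funext i
  rw [← Nat.div_add_mod (f i) m, ← Nat.div_add_mod (g i) m, hdiv, hmod]

theorem card_filter_sum_eq_le_of_div_mod {n m : ℕ} {A S : Finset ℕ}
    (hA : IsBhSet (n + 1) (A : Set ℕ)) (hS : ∀ x ∈ S, x / m ∈ A ∧ x % m < m) (k : ℕ) :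
    ((Fintype.piFinset fun _ : Fin (n + 1) => S).filter fun f => ∑ i, f i = k).card ≤
      (n + 1).factorial * m ^ n := by
  classical
  let code (f : Fin (n + 1) → ℕ) : (Fin n → ℕ) × Equiv.Perm (Fin (n + 1)) :=
    (fun i => f i.castSucc % m, Tuple.sort (f · / m))
  have hmem {f} (hf : f ∈ (Fintype.piFinset fun _ : Fin (n + 1) => S).filter
      fun f => ∑ i, f i = k) (i) : f i / m ∈ A ∧ f i % m < m :=
    hS _ (Fintype.mem_piFinset.mp (Finset.mem_filter.mp hf).1 i)
  calc _ ≤ (Fintype.piFinset (fun _ : Fin n => Finset.range m) ×ˢ Finset.univ).card := by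
        refine Finset.card_le_card_of_injOn code (fun f hf => ?_) fun f hf g hg hfg => ?_
        · simpa [code] using fun i : Fin n => (hmem hf i.castSucc).2
        · simp only [code, Prod.mk.injEq, funext_iff] at hfg
          exact eq_of_sum_eq_of_init_mod_eq_of_sort_div_eq hA (hmem hf) (hmem hg)
            ((Finset.mem_filter.mp hf).2.trans (Finset.mem_filter.mp hg).2.symm) hfg.1 hfg.2
    _ = (n + 1).factorial * m ^ n := by
        simp [Finset.card_product, Fintype.card_perm, mul_comm]

theorem lindstrom_dilate_plus_interval_general (h m : ℕ)
    (A : Finset ℕ)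
    (hBh : ∀ s t : Multiset ℕ, Multiset.card s = h → Multiset.card t = h →
      (∀ x ∈ s, x ∈ A) → (∀ x ∈ t, x ∈ A) → s.sum = t.sum → s = t)
    (S : Finset ℕ)
    (hSdef : S = (A ×ˢ Finset.range m).image fun p => m * p.1 + p.2) :
    ∀ k : ℕ,
      ((Fintype.piFinset fun _ : Fin h => S).filter
        fun f => (∑ i, f i) = k).card ≤ h.factorial * m ^ (h - 1) := by
  intro k
  cases h with
  | zero => exact (Finset.card_filter_le _ _).trans (by simp)
  | succ n =>
    exact card_filter_sum_eq_le_of_div_mod hBh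
      (fun x hx => div_mem_and_mod_lt_of_mem_image (hSdef ▸ hx)) k

theorem lindstrom_dilate_plus_interval (h n m : ℕ) (hh : 1 ≤ h) (hm : 1 ≤ m)
    (A : Finset ℕ) (hsub : A ⊆ Finset.Icc 1 n)
    (hBh : ∀ s t : Multiset ℕ, Multiset.card s = h → Multiset.card t = h →
      (∀ x ∈ s, x ∈ A) → (∀ x ∈ t, x ∈ A) → s.sum = t.sum → s = t)
    (S : Finset ℕ)
    (hSdef : S = (A ×ˢ Finset.range m).image fun p => m * p.1 + p.2) :
    ∀ k : ℕ,
      ((Fintype.piFinset fun _ : Fin h => S).filter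
        fun f => (∑ i, f i) = k).card ≤ h.factorial * m ^ (h - 1) :=
  lindstrom_dilate_plus_interval_general h m A hBh S hSdef
end

section
/- Let A be a Sidon subset of {1,...,n} with |A| = r. For every positive integer u ≤ r, one has r·u − u(u+1)/2 ≤ the number of distinct values among the differences a_j − a_i with 1 ≤ j − i ≤ u (i.e., all such differences are pairwise distinct), and their sum is less than n·u(u+1)/2. -/
/-!
Sidon means `a j - a i = a l - a k` forces `(i, j) = (k, l)`, so the differences of index gap
at most `u` are as many as the pairs of gap at most `u`, namely `∑_{k ≤ u} (r - k)`. For the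
sum, the row of gap `k` telescopes to the `k` largest elements minus the `k` smallest ones,
which is at most `k n - k`; summing over `k ≤ u` gives `n u(u+1)/2 - u(u+1)/2`.
-/

open Finset

theorem Finset.sum_Icc_one_id_mul_two (u : ℕ) : (∑ k ∈ Icc 1 u, k) * 2 = u * (u + 1) := by
  induction u with
  | zero => rfl
  | succ u ih => rw [sum_Icc_succ_top (by omega), add_mul, ih]; ring

theorem Finset.sum_range_shift_add_sum_range {M : Type*} [AddCommMonoid M] (f : ℕ → M)
    (m k : ℕ) :
    ∑ i ∈ range m, f (i + k) + ∑ i ∈ range k, f i =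
      ∑ i ∈ range k, f (i + m) + ∑ i ∈ range m, f i := by
  have hk := sum_range_add f k m
  have hm := sum_range_add f m k
  rw [add_comm k m] at hk
  simp only [add_comm _ k, add_comm _ m]
  rw [add_comm, ← hk, hm, add_comm]

theorem sum_range_shift_sub_add_le {b : ℕ → ℕ} {m k lo hi : ℕ}
    (hmono : MonotoneOn b (range (m + k)))
    (hbound : ∀ i ∈ range (m + k), lo ≤ b i ∧ b i ≤ hi) :
    ∑ i ∈ range m, (b (i + k) - b i) + k * lo ≤ k * hi := by
  have hdiff : ∑ i ∈ range m, (b (i + k) - b i) + ∑ i ∈ range m, b i =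
      ∑ i ∈ range m, b (i + k) := by
    rw [← sum_add_distrib]
    refine sum_congr rfl fun i hi => tsub_add_cancel_of_le ?_
    have := mem_range.1 hi
    exact hmono (mem_range.2 (by omega)) (mem_range.2 (by omega)) (by omega)
  have hlo : k * lo ≤ ∑ i ∈ range k, b i := by
    simpa using card_nsmul_le_sum (range k) b lo fun i hi =>
      (hbound i (mem_range.2 (by have := mem_range.1 hi; omega))).1
  have hhi : ∑ i ∈ range k, b (i + m) ≤ k * hi := by
    simpa using sum_le_card_nsmul (range k) (fun i => b (i + m)) hi fun i hi =>
      (hbound _ (mem_range.2 (by have := mem_range.1 hi; omega))).2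
  have := sum_range_shift_add_sum_range b m k
  omega

theorem injOn_sub_of_sidon {ι : Type*} [LinearOrder ι] {s : Set ι} {a : ι → ℕ}
    (hmono : StrictMonoOn a s)
    (hsidon : ∀ i ∈ s, ∀ j ∈ s, ∀ k ∈ s, ∀ l ∈ s,
      a i + a j = a k + a l → (a i = a k ∧ a j = a l) ∨ (a i = a l ∧ a j = a k)) :
    Set.InjOn (fun p : ι × ι => a p.2 - a p.1) {p | p.1 ∈ s ∧ p.2 ∈ s ∧ p.1 < p.2} := by
  rintro ⟨i, j⟩ ⟨hi : i ∈ s, hj : j ∈ s, hij : i < j⟩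
    ⟨k, l⟩ ⟨hk : k ∈ s, hl : l ∈ s, hkl : k < l⟩ (h : a j - a i = a l - a k)
  have hlt₁ := hmono hi hj hij
  have hlt₂ := hmono hk hl hkl
  rcases hsidon j hj k hk l hl i hi (by omega) with ⟨hjl, hki⟩ | ⟨hji, -⟩
  · rw [hmono.injOn hj hl hjl, hmono.injOn hk hi hki]
  · omega

def gapPairs (r u : ℕ) : Finset (ℕ × ℕ) :=
  {p ∈ Icc 1 r ×ˢ Icc 1 r | p.1 < p.2 ∧ p.2 - p.1 ≤ u}

theorem sum_gapPairs {M : Type*} [AddCommMonoid M] (r u : ℕ) (f : ℕ × ℕ → M) :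
    ∑ p ∈ gapPairs r u, f p =
      ∑ k ∈ Icc 1 u, ∑ i ∈ range (r - k), f (i + 1, i + k + 1) := by
  rw [sum_sigma']
  symm
  refine sum_nbij' (fun q => (q.2 + 1, q.2 + q.1 + 1)) (fun p => ⟨p.2 - p.1, p.1 - 1⟩)
    ?_ ?_ ?_ ?_ fun _ _ => rfl
  all_goals
    intro p hp
    simp only [gapPairs, mem_filter, mem_sigma, mem_product, mem_Icc, mem_range]
      at hp ⊢
  · omega
  · omega
  · exact Sigma.ext (by dsimp only; omega) (heq_of_eq (by dsimp only; omega))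
  · exact Prod.ext (by omega) (by omega)

theorem le_card_gapPairs (r u : ℕ) : r * u - u * (u + 1) / 2 ≤ (gapPairs r u).card := by
  have hcard : (gapPairs r u).card = ∑ k ∈ Icc 1 u, (r - k) := by
    rw [card_eq_sum_ones, sum_gapPairs]
    simp
  have hsplit : r * u ≤ ∑ k ∈ Icc 1 u, (r - k) + ∑ k ∈ Icc 1 u, k :=
    calc r * u = ∑ k ∈ Icc 1 u, r := by simp [mul_comm]
      _ ≤ ∑ k ∈ Icc 1 u, (r - k + k) := sum_le_sum fun _ _ => le_tsub_add
      _ = _ := sum_add_distrib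
  have := sum_Icc_one_id_mul_two u
  omega

theorem sum_gapPairs_sub_lt {n r u : ℕ} {a : ℕ → ℕ} (hu : 1 ≤ u) (hur : u ≤ r)
    (hmono : MonotoneOn a (Icc 1 r)) (hrange : ∀ i ∈ Icc 1 r, 1 ≤ a i ∧ a i ≤ n) :
    ∑ p ∈ gapPairs r u, (a p.2 - a p.1) < n * (u * (u + 1) / 2) := by
  have hrow : ∀ k ∈ Icc 1 u,
      ∑ i ∈ range (r - k), (a (i + k + 1) - a (i + 1)) + k * 1 ≤ k * n := by
    intro k hk
    have hr : r - k + k = r := by simp at hk; omega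
    refine sum_range_shift_sub_add_le (b := fun i => a (i + 1)) ?_ ?_
    · intro i hi j hj hij
      simp only [hr, coe_range, Set.mem_Iio] at hi hj
      exact hmono (by simp; omega) (by simp; omega) (by omega)
    · intro i hi
      simp only [hr, mem_range] at hi
      exact hrange _ (by simp; omega)
  have hsum := sum_le_sum hrow
  rw [sum_add_distrib, ← sum_mul, ← sum_mul] at hsum
  have hgauss := sum_Icc_one_id_mul_two u
  have hpos : 1 ≤ ∑ k ∈ Icc 1 u, k :=
    single_le_sum (f := fun k => k) (fun _ _ => Nat.zero_le _) (mem_Icc.2 ⟨le_rfl, hu⟩)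
  rw [sum_gapPairs, show u * (u + 1) / 2 = ∑ k ∈ Icc 1 u, k by omega]
  dsimp only
  rw [mul_one, mul_comm] at hsum
  omega

theorem erdos_turan_difference_count (n r u : ℕ) (hu : 1 ≤ u) (hur : u ≤ r)
    (a : ℕ → ℕ)
    (hmono : ∀ i ∈ Finset.Icc 1 r, ∀ j ∈ Finset.Icc 1 r, i < j → a i < a j)
    (hrange : ∀ i ∈ Finset.Icc 1 r, 1 ≤ a i ∧ a i ≤ n)
    (hsidon : ∀ i ∈ Finset.Icc 1 r, ∀ j ∈ Finset.Icc 1 r,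
      ∀ k ∈ Finset.Icc 1 r, ∀ l ∈ Finset.Icc 1 r,
      a i + a j = a k + a l → (a i = a k ∧ a j = a l) ∨ (a i = a l ∧ a j = a k)) :
    r * u - u * (u + 1) / 2 ≤
      (((Finset.Icc 1 r ×ˢ Finset.Icc 1 r).filter
        fun p => p.1 < p.2 ∧ p.2 - p.1 ≤ u).image fun p => a p.2 - a p.1).card ∧
    (∑ p ∈ (Finset.Icc 1 r ×ˢ Finset.Icc 1 r).filter
        (fun p => p.1 < p.2 ∧ p.2 - p.1 ≤ u), (a p.2 - a p.1)) <
      n * (u * (u + 1) / 2) := by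
  have hstrict : StrictMonoOn a (Icc 1 r) := fun i hi j hj => hmono i hi j hj
  have hinj : Set.InjOn (fun p : ℕ × ℕ => a p.2 - a p.1) (gapPairs r u) :=
    (injOn_sub_of_sidon hstrict hsidon).mono fun p hp => by
      simp only [gapPairs, coe_filter, mem_product] at hp
      exact ⟨hp.1.1, hp.1.2, hp.2.1⟩
  exact ⟨(le_card_gapPairs r u).trans_eq (card_image_of_injOn hinj).symm,
    sum_gapPairs_sub_lt hu hur hstrict.monotoneOn hrange⟩
end
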